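/- Let E be an R-module with symmetric bilinear form ⟨·,·⟩ extended to Λ•E as the Schouten-type bracket, and suppose C̃ : E^n → R satisfies C̃(...,e_i,e_{i+1},...) + C̃(...,e_{i+1},e_i,...) = σ(...,ê_i,ê_{i+1},...)(⟨e_i,e_{i+1}⟩) for a symbol σ : E^{n-2} → Der(R). Let C̄ and σ̄ be the respective extensions by derivation in each entry to arguments in Λ^{≥1}E. Then for all e, e' ∈ E and homogeneous P_1,...,P_{n-2} ∈ Λ^{≥1}E: C̄(P_1,...,P_i, e, e', P_{i+1},...,P_{n-2}) + C̄(P_1,...,P_i, e', e, P_{i+1},...,P_{n-2}) = σ̄(P_1,...,P_{n-2})(⟨e,e'⟩). -/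

import Mathlib

/-!
Both sides, as functions of `(P₁, …, P_{n-2})`, are additive in each entry and obey the same
graded Leibniz rule: inserting the two vectors `e, e'` shifts every sign exponent by `0` or `2`.
On tuples of vectors they agree by the pre-multi-Courant condition. An extension by derivation is
determined by its values on vectors (induction on the total degree, splitting a vector factor off
an entry of degree at least `2`), so the two sides agree everywhere.
-/

open ExteriorAlgebra

/-- The submodule of homogeneous `p`-vectors in the exterior algebra. -/
noncomputable def extGrade (R : Type*) [CommRing R] (E : Type*) [AddCommGroup E]
    [Module R E] (p : ℕ) : Submodule R (ExteriorAlgebra R E) :=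
  LinearMap.range (ExteriorAlgebra.ι R : E →ₗ[R] ExteriorAlgebra R E) ^ p

/-- Insert two elements `x, y` at position `i` into an `m`-tuple. -/
def insert2 {A : Type*} {m : ℕ} (P : Fin m → A) (i : Fin (m + 1)) (x y : A) :
    Fin (m + 2) → A := fun j =>
  if hj : (j : ℕ) < (i : ℕ) then P ⟨j, by have := i.isLt; omega⟩
  else if hj2 : (j : ℕ) = (i : ℕ) then x
  else if hj3 : (j : ℕ) = (i : ℕ) + 1 then y
  else P ⟨(j : ℕ) - 2, by have := j.isLt; have := i.isLt; omega⟩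

open Function Finset

namespace Fin
variable {A B : Type*} {n : ℕ}

lemma forall_rel_insertNth (r : A → B → Prop) (c : Fin (n + 1)) {a : A} {x : B}
    {p : Fin n → A} {P : Fin n → B} (hx : r a x) (hP : ∀ j, r (p j) (P j)) :
    ∀ k, r ((c.insertNth a p : Fin (n + 1) → A) k) ((c.insertNth x P : Fin (n + 1) → B) k) :=
  (forall_iff_succAbove c).2 ⟨by simpa, by simpa⟩

lemma insertNth_apply_comp (f : A → B) (c : Fin (n + 1)) (x : A) (q : Fin n → A) :
    c.insertNth (f x) (fun j => f (q j)) = fun k => f ((c.insertNth x q : Fin (n + 1) → A) k) :=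
  funext fun k => (forall_rel_insertNth (fun a b => f a = b) c rfl (fun _ => rfl) k).symm

lemma insertNth_insertNth_comp_swap (i : Fin (n + 1)) (x y : A) (P : Fin n → A) :
    (fun k => (i.castSucc.insertNth x (i.insertNth y P) : Fin (n + 2) → A)
        (Equiv.swap i.castSucc i.succ k))
      = i.castSucc.insertNth y (i.insertNth x P) := by
  ext k
  induction k using Fin.succAboveCases i.castSucc with
  | x => simp [← succAbove_castSucc_self]
  | p k =>
    induction k using Fin.succAboveCases i with
    | x =>
      rw [succAbove_castSucc_self, Equiv.swap_apply_right, ← succAbove_castSucc_self,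
        insertNth_apply_same, insertNth_apply_succAbove, insertNth_apply_same]
    | p j =>
      have h₁ : i.castSucc.succAbove (i.succAbove j) ≠ i.castSucc := succAbove_ne _ _
      have h₂ : i.castSucc.succAbove (i.succAbove j) ≠ i.succ := by
        rw [← succAbove_castSucc_self, Ne, succAbove_right_inj]; exact succAbove_ne _ _
      rw [Equiv.swap_apply_of_ne_of_ne h₁ h₂]
      simp

lemma removeNth_removeNth_eq_ite (es : Fin (n + 2) → A) (k : Fin (n + 1)) :
    k.removeNth (k.castSucc.removeNth es) = fun j : Fin n =>
      if (j : ℕ) < (k : ℕ) then es ⟨j, by omega⟩ else es ⟨(j : ℕ) + 2, by omega⟩ := by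
  ext j
  simp only [removeNth]
  split_ifs with h
  · rw [succAbove_of_castSucc_lt k j (lt_def.2 h),
      succAbove_of_castSucc_lt k.castSucc j.castSucc (lt_def.2 h)]
    rfl
  · rw [succAbove_of_le_castSucc k j (le_def.2 (by simp; omega)),
      succAbove_of_le_castSucc k.castSucc j.succ (le_def.2 (by simp; omega))]
    rfl

variable {M : Type*} [AddCommMonoid M]

lemma sum_Ioi_succAbove_insertNth (c : Fin (n + 1)) (x : M) (q : Fin n → M) (j : Fin n) :
    ∑ k ∈ Ioi (c.succAbove j), c.insertNth x q k
      = ∑ k ∈ Ioi j, q k + if j.castSucc < c then x else 0 := by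
  rw [← filter_lt_eq_Ioi, ← filter_lt_eq_Ioi, sum_filter, sum_filter, sum_univ_succAbove _ c]
  simp only [insertNth_apply_same, insertNth_apply_succAbove, succAbove_lt_succAbove_iff,
    succAbove_lt_iff_castSucc_lt]
  exact add_comm _ _

lemma sum_Ioi_insertNth_insertNth (i : Fin (n + 1)) (a b : M) (p : Fin n → M) (j : Fin n) :
    ∑ k ∈ Ioi (i.castSucc.succAbove (i.succAbove j)), i.castSucc.insertNth a (i.insertNth b p) k
      = ∑ k ∈ Ioi j, p k + if j.castSucc < i then a + b else 0 := by
  rw [sum_Ioi_succAbove_insertNth, sum_Ioi_succAbove_insertNth]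
  simp only [castSucc_lt_castSucc_iff, succAbove_lt_iff_castSucc_lt]
  split_ifs <;> simp [add_assoc, add_comm b]

lemma sum_Ici_insertNth_insertNth (i : Fin (n + 1)) (a b : M) (p : Fin n → M) (j : Fin n) :
    ∑ k ∈ Ici (i.castSucc.succAbove (i.succAbove j)), i.castSucc.insertNth a (i.insertNth b p) k
      = ∑ k ∈ Ici j, p k + if j.castSucc < i then a + b else 0 := by
  rw [← sum_Ioi_add_eq_sum_Ici, ← sum_Ioi_add_eq_sum_Ici, sum_Ioi_insertNth_insertNth]
  simp only [insertNth_apply_succAbove]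
  abel

end Fin

lemma insert2_eq_insertNth {A : Type*} {n : ℕ} (P : Fin n → A) (i : Fin (n + 1)) (x y : A) :
    insert2 P i x y = i.castSucc.insertNth x (i.insertNth y P) := by
  ext k
  induction k using Fin.succAboveCases i.castSucc with
  | x => simp [insert2]
  | p k =>
    rw [Fin.insertNth_apply_succAbove]
    induction k using Fin.succAboveCases i with
    | x => simp [insert2]
    | p j =>
      rw [Fin.insertNth_apply_succAbove]
      rcases lt_or_ge j.castSucc i with h | h
      · rw [Fin.succAbove_of_castSucc_lt _ _ h,
          Fin.succAbove_of_castSucc_lt _ _ (by simpa using h)]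
        simp only [insert2, Fin.lt_def, Fin.val_castSucc] at h ⊢
        simp [h]
      · rw [Fin.succAbove_of_le_castSucc _ _ h, Fin.succAbove_of_le_castSucc _ _
          (by simp only [Fin.le_def, Fin.val_castSucc, Fin.val_succ] at h ⊢; omega)]
        simp only [insert2, Fin.le_def, Fin.val_castSucc, Fin.val_succ] at h ⊢
        rw [dif_neg (by omega), dif_neg (by omega), dif_neg (by omega)]
        rfl

lemma forall_rel_update {κ A B : Type*} [DecidableEq κ] (r : A → B → Prop) (i : κ) {a : A}
    {x : B} {p : κ → A} {P : κ → B} (hx : r a x) (hP : ∀ j, r (p j) (P j)) :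
    ∀ j, r (update p i a j) (update P i x j) := by
  intro j
  rcases eq_or_ne j i with rfl | h
  · simpa
  · simpa [h] using hP j

section ExtensionByDerivation

variable {R : Type*} [CommRing R] {E : Type*} [AddCommGroup E] [Module R E] {n : ℕ}

lemma extGrade_one : extGrade R E 1 = LinearMap.range (ι R) := pow_one _

lemma extGrade_succ (q : ℕ) : extGrade R E (q + 1) = extGrade R E q * extGrade R E 1 := by
  rw [extGrade_one]; exact pow_succ _ q

lemma ι_mem_extGrade_one (v : E) : ι R v ∈ extGrade R E 1 := by
  rw [extGrade_one]; exact LinearMap.mem_range_self _ v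

def IsAdditiveInEachEntry (F : (Fin n → ExteriorAlgebra R E) → ExteriorAlgebra R E) : Prop :=
  ∀ i v x y, F (update v i (x + y)) = F (update v i x) + F (update v i y)

/-- The graded Leibniz rule of an extension by derivation, `p j` being the degree of `P j`. -/
def IsDerivationInEachEntry (F : (Fin n → ExteriorAlgebra R E) → ExteriorAlgebra R E) : Prop :=
  ∀ (i : Fin n) (p : Fin n → ℕ), (∀ j, 1 ≤ p j) → ∀ P : Fin n → ExteriorAlgebra R E,
    (∀ j, P j ∈ extGrade R E (p j)) → ∀ e : E,
    F (update P i (P i * ι R e))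
      = ((-1 : ℤ) ^ (p i * ∑ j ∈ Ioi i, p j)) • (P i * F (update P i (ι R e)))
        + ((-1 : ℤ) ^ (∑ j ∈ Ici i, p j)) • (ι R e * F P)

namespace IsAdditiveInEachEntry

variable {F G : (Fin n → ExteriorAlgebra R E) → ExteriorAlgebra R E}

lemma add (hF : IsAdditiveInEachEntry F) (hG : IsAdditiveInEachEntry G) :
    IsAdditiveInEachEntry (F + G) := fun i v x y => by
  simp only [Pi.add_apply, hF i v x y, hG i v x y]; abel

lemma comp_insertNth {F : (Fin (n + 1) → ExteriorAlgebra R E) → ExteriorAlgebra R E}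
    (hF : IsAdditiveInEachEntry F) (c : Fin (n + 1)) (x : ExteriorAlgebra R E) :
    IsAdditiveInEachEntry fun P => F (c.insertNth x P) := fun i v y z => by
  simp only [Fin.insertNth_update, hF _ _ y z]

end IsAdditiveInEachEntry

namespace IsDerivationInEachEntry

variable {F G : (Fin n → ExteriorAlgebra R E) → ExteriorAlgebra R E}

lemma add (hF : IsDerivationInEachEntry F) (hG : IsDerivationInEachEntry G) :
    IsDerivationInEachEntry (F + G) := fun i p hp P hP e => by
  simp only [Pi.add_apply, hF i p hp P hP e, hG i p hp P hP e, mul_add, smul_add]; abel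

lemma comp_insertNth_insertNth {F : (Fin (n + 2) → ExteriorAlgebra R E) → ExteriorAlgebra R E}
    (hF : IsDerivationInEachEntry F) (i : Fin (n + 1)) {a b : ℕ} (ha : 1 ≤ a) (hb : 1 ≤ b)
    (hab : Even (a + b)) {x y : ExteriorAlgebra R E} (hx : x ∈ extGrade R E a)
    (hy : y ∈ extGrade R E b) :
    IsDerivationInEachEntry fun P => F (i.castSucc.insertNth x (i.insertNth y P)) := by
  intro j p hp P hP e
  have hQ := Fin.forall_rel_insertNth (fun d z => 1 ≤ d ∧ z ∈ extGrade R E d) i.castSucc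
    ⟨ha, hx⟩ (Fin.forall_rel_insertNth (fun d z => 1 ≤ d ∧ z ∈ extGrade R E d) i
      ⟨hb, hy⟩ fun j => ⟨hp j, hP j⟩)
  have h := hF (i.castSucc.succAbove (i.succAbove j)) _ (fun k => (hQ k).1) _ (fun k => (hQ k).2) e
  have hev : Even (if j.castSucc < i then a + b else 0) := by split_ifs <;> simp [hab]
  rw [Fin.insertNth_apply_succAbove, Fin.insertNth_apply_succAbove, Fin.insertNth_apply_succAbove,
    Fin.insertNth_apply_succAbove, Fin.sum_Ioi_insertNth_insertNth,
    Fin.sum_Ici_insertNth_insertNth, mul_add, pow_add, pow_add, (hev.mul_left _).neg_one_pow,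
    hev.neg_one_pow, mul_one, mul_one] at h
  simpa only [Fin.insertNth_update] using h

theorem eq_of_eq_on_ι (hF : IsDerivationInEachEntry F) (hG : IsDerivationInEachEntry G)
    (hFa : IsAdditiveInEachEntry F) (hGa : IsAdditiveInEachEntry G)
    (hι : ∀ v : Fin n → E, F (fun j => ι R (v j)) = G (fun j => ι R (v j)))
    {p : Fin n → ℕ} (hp : ∀ j, 1 ≤ p j) {P : Fin n → ExteriorAlgebra R E}
    (hP : ∀ j, P j ∈ extGrade R E (p j)) : F P = G P := by
  induction hN : ∑ j, p j using Nat.strong_induction_on generalizing p P with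
  | _ N ih =>
  by_cases hone : ∀ j, p j = 1
  · have hv : ∀ j, ∃ v : E, ι R v = P j := fun j => by
      simpa [hone j, extGrade_one] using hP j
    choose v hv using hv
    simpa only [hv] using hι v
  obtain ⟨j₀, hj₀⟩ := not_forall.1 hone
  have hupdate : ∀ {q z}, 1 ≤ q → z ∈ extGrade R E q →
      ∀ j, 1 ≤ update p j₀ q j ∧ update P j₀ z j ∈ extGrade R E (update p j₀ q j) :=
    fun hq hz => forall_rel_update (fun d w => 1 ≤ d ∧ w ∈ extGrade R E d) j₀ ⟨hq, hz⟩
      fun j => ⟨hp j, hP j⟩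
  have ih' : ∀ {q z}, 1 ≤ q → q < p j₀ → z ∈ extGrade R E q →
      F (update P j₀ z) = G (update P j₀ z) := fun hq hlt hz =>
    ih _ (hN ▸ sum_lt_sum (fun j _ => by rcases eq_or_ne j j₀ with rfl | h <;> simp [*, hlt.le])
        ⟨j₀, mem_univ _, by simpa⟩)
      (fun j => (hupdate hq hz j).1) (fun j => (hupdate hq hz j).2) rfl
  have hdeg : 1 ≤ p j₀ - 1 := by have := hp j₀; omega
  have hmem : P j₀ ∈ extGrade R E (p j₀ - 1) * extGrade R E 1 := by
    rw [← extGrade_succ, Nat.sub_add_cancel (hp j₀)]; exact hP j₀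
  suffices ∀ z ∈ extGrade R E (p j₀ - 1) * extGrade R E 1,
      F (update P j₀ z) = G (update P j₀ z) by simpa using this _ hmem
  intro z hz
  induction hz using Submodule.mul_induction_on' with
  | mem_mul_mem s hs t ht =>
    rw [extGrade_one] at ht
    obtain ⟨e, rfl⟩ := ht
    have hF' := hF j₀ _ (fun j => (hupdate hdeg hs j).1) _ (fun j => (hupdate hdeg hs j).2) e
    have hG' := hG j₀ _ (fun j => (hupdate hdeg hs j).1) _ (fun j => (hupdate hdeg hs j).2) e
    simp only [update_self, update_idem] at hF' hG'
    rw [hF', hG', ih' le_rfl (by omega) (ι_mem_extGrade_one e), ih' hdeg (by omega) hs]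
  | add x _ y _ hx hy => rw [hFa, hGa, hx, hy]

end IsDerivationInEachEntry

end ExtensionByDerivation

/-- the extensions by derivation `C̄`, `σ̄` of a pre-multi-Courant
structure `C̃` with symbol `σ` satisfy
`C̄(P₁,…,Pᵢ,e,e',Pᵢ₊₁,…,P_{n-2}) + C̄(P₁,…,Pᵢ,e',e,Pᵢ₊₁,…,P_{n-2}) = σ̄(P₁,…,P_{n-2})(⟨e,e'⟩)`. -/
theorem extension_by_derivation_higher_courant
    {R : Type*} [CommRing R] {E : Type*} [AddCommGroup E] [Module R E]
    (bil : E →ₗ[R] E →ₗ[R] R)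
    (m : ℕ) (Ct : (Fin (m + 2) → E) → R) (σ : (Fin m → E) → R → R)
    -- the pre-multi-Courant condition on `C̃` with symbol `σ`:
    (hsrc : ∀ (es : Fin (m + 2) → E) (k : Fin (m + 1)),
      Ct es + Ct (fun x => es (Equiv.swap k.castSucc k.succ x))
        = σ (fun j : Fin m =>
              if (j : ℕ) < (k : ℕ) then es ⟨j, by have := j.isLt; omega⟩
              else es ⟨(j : ℕ) + 2, by have := j.isLt; omega⟩)
            (bil (es k.castSucc) (es k.succ)))
    (Cbar : (Fin (m + 2) → ExteriorAlgebra R E) → ExteriorAlgebra R E)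
    (σbar : (Fin m → ExteriorAlgebra R E) → R → ExteriorAlgebra R E)
    -- `C̄` is multilinear and agrees with `C̃` on sections:
    (hCml : ∀ (i : Fin (m + 2)) (v : Fin (m + 2) → ExteriorAlgebra R E) (a : R)
        (x y : ExteriorAlgebra R E),
      Cbar (Function.update v i (a • x + y))
        = a • Cbar (Function.update v i x) + Cbar (Function.update v i y))
    (hCagree : ∀ e : Fin (m + 2) → E,
      Cbar (fun j => ι R (e j)) = algebraMap R (ExteriorAlgebra R E) (Ct e))
    -- the derivation property of `C̄` in each entry:
    (hCder : ∀ (i : Fin (m + 2)) (p : Fin (m + 2) → ℕ), (∀ j, 1 ≤ p j) →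
      ∀ (P : Fin (m + 2) → ExteriorAlgebra R E),
        (∀ j, P j ∈ extGrade R E (p j)) → ∀ e : E,
        Cbar (Function.update P i (P i * ι R e))
          = ((-1 : ℤ) ^ (p i * ∑ j ∈ Finset.Ioi i, p j)) •
              (P i * Cbar (Function.update P i (ι R e)))
            + ((-1 : ℤ) ^ (∑ j ∈ Finset.Ici i, p j)) • (ι R e * Cbar P))
    -- `σ̄` is multilinear and agrees with `σ` on sections:
    (hσml : ∀ (i : Fin m) (v : Fin m → ExteriorAlgebra R E) (a : R)
        (x y : ExteriorAlgebra R E) (f : R),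
      σbar (Function.update v i (a • x + y)) f
        = a • σbar (Function.update v i x) f + σbar (Function.update v i y) f)
    (hσagree : ∀ (e : Fin m → E) (f : R),
      σbar (fun j => ι R (e j)) f = algebraMap R (ExteriorAlgebra R E) (σ e f))
    -- the derivation property of `σ̄` in each entry:
    (hσder : ∀ (i : Fin m) (p : Fin m → ℕ), (∀ j, 1 ≤ p j) →
      ∀ (P : Fin m → ExteriorAlgebra R E),
        (∀ j, P j ∈ extGrade R E (p j)) → ∀ (e : E) (f : R),
        σbar (Function.update P i (P i * ι R e)) f
          = ((-1 : ℤ) ^ (p i * ∑ j ∈ Finset.Ioi i, p j)) •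
              (P i * σbar (Function.update P i (ι R e)) f)
            + ((-1 : ℤ) ^ (∑ j ∈ Finset.Ici i, p j)) • (ι R e * σbar P f)) :
    ∀ (i : Fin (m + 1)) (p : Fin m → ℕ), (∀ j, 1 ≤ p j) →
      ∀ (P : Fin m → ExteriorAlgebra R E), (∀ j, P j ∈ extGrade R E (p j)) →
      ∀ e e' : E,
        Cbar (insert2 P i (ι R e) (ι R e')) + Cbar (insert2 P i (ι R e') (ι R e))
          = σbar P (bil e e') := by
  intro i p hp P hP e e'
  have hCadd : IsAdditiveInEachEntry Cbar := fun k v x y => by simpa using hCml k v 1 x y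
  have hσadd : IsAdditiveInEachEntry (σbar · (bil e e')) := fun k v x y => by
    simpa using hσml k v 1 x y _
  have hCins_add (x y : E) : IsAdditiveInEachEntry
      fun Q => Cbar (i.castSucc.insertNth (ι R x) (i.insertNth (ι R y) Q)) :=
    (hCadd.comp_insertNth _ _).comp_insertNth _ _
  have hCins_der (x y : E) : IsDerivationInEachEntry
      fun Q => Cbar (i.castSucc.insertNth (ι R x) (i.insertNth (ι R y) Q)) :=
    IsDerivationInEachEntry.comp_insertNth_insertNth hCder i le_rfl le_rfl even_two
      (ι_mem_extGrade_one x) (ι_mem_extGrade_one y)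
  simp only [insert2_eq_insertNth]
  refine IsDerivationInEachEntry.eq_of_eq_on_ι ((hCins_der e e').add (hCins_der e' e))
    (fun k p hp P hP v => hσder k p hp P hP v _) ((hCins_add e e').add (hCins_add e' e)) hσadd
    (fun v => ?_) hp hP
  have hsrc' := hsrc (i.castSucc.insertNth e (i.insertNth e' v)) i
  rw [Fin.insertNth_insertNth_comp_swap, ← Fin.removeNth_removeNth_eq_ite,
    Fin.removeNth_insertNth, Fin.removeNth_insertNth, Fin.insertNth_apply_same,
    ← Fin.succAbove_castSucc_self, Fin.insertNth_apply_succAbove,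
    Fin.insertNth_apply_same] at hsrc'
  simp only [Pi.add_apply]
  rw [Fin.insertNth_apply_comp (ι R) i e' v, Fin.insertNth_apply_comp (ι R) i e v,
    Fin.insertNth_apply_comp (ι R) i.castSucc e, Fin.insertNth_apply_comp (ι R) i.castSucc e',
    hCagree, hCagree, hσagree, ← map_add, hsrc']
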